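/- For integers m_1 ≥ m_2 ≥ 0 one has C(m_1,m_2) = (m_2(m_1+3)(m_1+8)(m_2+5))/(4(m_1+5)(m_1+6)(m_2+2)(m_2+3)); in particular C(m_1,m_2) = 0 if and only if m_2 = 0. -/

import Mathlib

open Finset

/-- A tuple of integers is dominant if its entries are weakly decreasing and nonnegative. -/
def Dominant {r : ℕ} (m : Fin r → ℤ) : Prop :=
  (∀ j k : Fin r, j ≤ k → m k ≤ m j) ∧ ∀ j : Fin r, 0 ≤ m j

instance {r : ℕ} (m : Fin r → ℤ) : Decidable (Dominant m) := by
  unfold Dominant; infer_instance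

/-- The genus `p = (e+1) + (r-1)d + b/2`. -/
noncomputable def genusP (r : ℕ) (b d e : ℝ) : ℝ := (e + 1) + ((r : ℝ) - 1) * d + b / 2

/-- `n = r(p + b/2)`. -/
noncomputable def dimN (r : ℕ) (b d e : ℝ) : ℝ := r * (genusP r b d e + b / 2)

/-- `ρ_k = (r-k)d/2 + e/2 + b/4` (1-indexed `k`). -/
noncomputable def rho (r : ℕ) (b d e : ℝ) (k : Fin r) : ℝ :=
  ((r : ℝ) - ((k : ℕ) + 1)) * d / 2 + e / 2 + b / 4

/-- The coefficient `A(m,k)`. -/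
noncomputable def Acoef (r : ℕ) (b d e : ℝ) (m : Fin r → ℤ) (k : Fin r) : ℝ :=
  (genusP r b d e / (2 * dimN r b d e)) *
    ((2 * ((m k : ℝ) + rho r b d e k) + b / 2 + 1) *
        (2 * ((m k : ℝ) + rho r b d e k) + b / 2 + e)) /
      ((2 * ((m k : ℝ) + rho r b d e k)) * (2 * ((m k : ℝ) + rho r b d e k) + 1)) *
    ∏ j ∈ univ.erase k,
      ((((m k : ℝ) + rho r b d e k) - ((m j : ℝ) + rho r b d e j) + d / 2) *
          (((m k : ℝ) + rho r b d e k) + ((m j : ℝ) + rho r b d e j) + d / 2)) /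
        ((((m k : ℝ) + rho r b d e k) - ((m j : ℝ) + rho r b d e j)) *
          (((m k : ℝ) + rho r b d e k) + ((m j : ℝ) + rho r b d e j)))

/-- The coefficient `B(m,k)`. -/
noncomputable def Bcoef (r : ℕ) (b d e : ℝ) (m : Fin r → ℤ) (k : Fin r) : ℝ :=
  (genusP r b d e / (2 * dimN r b d e)) *
    ((2 * ((m k : ℝ) + rho r b d e k) - b / 2 - 1) *
        (2 * ((m k : ℝ) + rho r b d e k) - b / 2 - e)) /
      ((2 * ((m k : ℝ) + rho r b d e k)) * (2 * ((m k : ℝ) + rho r b d e k) - 1)) *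
    ∏ j ∈ univ.erase k,
      ((((m k : ℝ) + rho r b d e k) + ((m j : ℝ) + rho r b d e j) - d / 2) *
          (((m k : ℝ) + rho r b d e k) - ((m j : ℝ) + rho r b d e j) - d / 2)) /
        ((((m k : ℝ) + rho r b d e k) + ((m j : ℝ) + rho r b d e j)) *
          (((m k : ℝ) + rho r b d e k) - ((m j : ℝ) + rho r b d e j)))

/-- The coefficient `C(m)`. -/
noncomputable def Ccoef (r : ℕ) (b d e : ℝ) (m : Fin r → ℤ) : ℝ :=
  1 - (∑ k ∈ univ.filter (fun k : Fin r =>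
        Dominant (fun j => m j + if j = k then 1 else 0)), Acoef r b d e m k)
    - (∑ k ∈ univ.filter (fun k : Fin r =>
        Dominant (fun j => m j - if j = k then 1 else 0)), Bcoef r b d e m k)


/-!
When `m ± e_k` leaves the dominant chamber, the coefficient `A(m,k)` resp. `B(m,k)` vanishes
anyway: since `ρ_{k-1} - ρ_k = d/2` and `2ρ_r = b/2 + e`, one factor of its numerator is zero.
Hence `C(m) = 1 - ∑ₖ A(m,k) - ∑ₖ B(m,k)` on the whole chamber. For `𝔢₆`, in the variables
`X = m₁ + 11/2`, `Y = m₂ + 5/2` this is a rational function identity,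
`C = (X² - 25/4)(Y² - 25/4) / (4(X² - 1/4)(Y² - 1/4))`, and `Y² - 25/4 = m₂(m₂ + 5)`.
-/

section BoundaryTerms

variable {r : ℕ} {b d e : ℝ} {m : Fin r → ℤ}

lemma rho_sub_rho_of_succ_eq {j k : Fin r} (h : (j : ℕ) + 1 = k) :
    rho r b d e j - rho r b d e k = d / 2 := by
  have hk : ((k : ℕ) : ℝ) = (j : ℕ) + 1 := by exact_mod_cast h.symm
  rw [rho, rho, hk]
  ring

lemma two_mul_rho_last {k : Fin r} (h : (k : ℕ) + 1 = r) :
    2 * rho r b d e k = b / 2 + e := by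
  have hr : (r : ℝ) = (k : ℕ) + 1 := by exact_mod_cast h.symm
  rw [rho, hr]
  ring

lemma Acoef_eq_zero_of_pred_eq {j k : Fin r} (hjk : (j : ℕ) + 1 = k) (hm : m j = m k) :
    Acoef r b d e m k = 0 := by
  refine mul_eq_zero_of_right _ (prod_eq_zero (i := j) (by simp [Fin.ext_iff]; omega) ?_)
  have : ((m k : ℝ) + rho r b d e k) - ((m j : ℝ) + rho r b d e j) + d / 2 = 0 := by
    rw [hm]; linarith [rho_sub_rho_of_succ_eq (b := b) (d := d) (e := e) hjk]
  rw [this, zero_mul, zero_div]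

lemma Bcoef_eq_zero_of_eq_succ {j k : Fin r} (hkj : (k : ℕ) + 1 = j) (hm : m k = m j) :
    Bcoef r b d e m k = 0 := by
  refine mul_eq_zero_of_right _ (prod_eq_zero (i := j) (by simp [Fin.ext_iff]; omega) ?_)
  have : ((m k : ℝ) + rho r b d e k) - ((m j : ℝ) + rho r b d e j) - d / 2 = 0 := by
    rw [hm]; linarith [rho_sub_rho_of_succ_eq (b := b) (d := d) (e := e) hkj]
  rw [this, mul_zero, zero_div]

lemma Bcoef_eq_zero_of_last {k : Fin r} (hk : (k : ℕ) + 1 = r) (hm : m k = 0) :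
    Bcoef r b d e m k = 0 := by
  refine mul_eq_zero_of_left (div_eq_zero_iff.2 (Or.inl ?_)) _
  have : 2 * ((m k : ℝ) + rho r b d e k) - b / 2 - e = 0 := by
    rw [hm, Int.cast_zero, zero_add, two_mul_rho_last hk]; ring
  rw [this, mul_zero, mul_zero]

lemma exists_pred_eq_of_not_dominant_add (hm : Dominant m) {k : Fin r}
    (h : ¬ Dominant (fun j => m j + if j = k then 1 else 0)) :
    ∃ j : Fin r, (j : ℕ) + 1 = k ∧ m j = m k := by
  obtain ⟨hmono, hnonneg⟩ := hm
  simp only [Dominant, not_and_or, not_forall, not_le] at h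
  rcases h with ⟨i, i', hii', hlt⟩ | ⟨i, hneg⟩
  · have hmi := hmono i i' hii'
    obtain rfl : i' = k := by
      by_contra hi'
      rw [if_neg hi'] at hlt
      split_ifs at hlt <;> omega
    have hi : i ≠ i' := by rintro rfl; simp at hlt
    rw [if_pos rfl, if_neg hi] at hlt
    have hii : (i : ℕ) < i' := lt_of_le_of_ne hii' (Fin.val_ne_of_ne hi)
    let j : Fin r := ⟨i' - 1, by omega⟩
    have hij := hmono i j (Fin.le_def.2 (by simp [j]; omega))
    have hji := hmono j i' (Fin.le_def.2 (by simp [j]))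
    exact ⟨j, by simp [j]; omega, by omega⟩
  · have := hnonneg i
    split_ifs at hneg <;> omega

lemma exists_succ_eq_or_last_of_not_dominant_sub (hm : Dominant m) {k : Fin r}
    (h : ¬ Dominant (fun j => m j - if j = k then 1 else 0)) :
    (∃ j : Fin r, (k : ℕ) + 1 = j ∧ m k = m j) ∨ ((k : ℕ) + 1 = r ∧ m k = 0) := by
  obtain ⟨hmono, hnonneg⟩ := hm
  simp only [Dominant, not_and_or, not_forall, not_le] at h
  rcases h with ⟨i, i', hii', hlt⟩ | ⟨i, hneg⟩
  · have hmi := hmono i i' hii'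
    obtain rfl : i = k := by
      by_contra hi
      rw [if_neg hi] at hlt
      split_ifs at hlt <;> omega
    have hi : i' ≠ i := by rintro rfl; simp at hlt
    rw [if_pos rfl, if_neg hi] at hlt
    have hii : (i : ℕ) < i' := lt_of_le_of_ne hii' (Fin.val_ne_of_ne hi.symm)
    let j : Fin r := ⟨i + 1, by omega⟩
    have hij := hmono i j (Fin.le_def.2 (by simp [j]))
    have hji := hmono j i' (Fin.le_def.2 (by simp [j]; omega))
    exact Or.inl ⟨j, rfl, by omega⟩
  · obtain rfl : i = k := by
      by_contra hi
      rw [if_neg hi] at hneg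
      exact absurd (hnonneg i) (not_le.2 (by omega))
    rw [if_pos rfl] at hneg
    have hmi : m i = 0 := by linarith [hnonneg i]
    by_cases hlast : (i : ℕ) + 1 < r
    · let j : Fin r := ⟨i + 1, hlast⟩
      have := hmono i j (Fin.le_def.2 (by simp [j]))
      exact Or.inl ⟨j, rfl, by linarith [hnonneg j]⟩
    · exact Or.inr ⟨by omega, hmi⟩

theorem Ccoef_eq_of_dominant (hm : Dominant m) :
    Ccoef r b d e m = 1 - ∑ k, Acoef r b d e m k - ∑ k, Bcoef r b d e m k := by
  rw [Ccoef, sum_filter, sum_filter]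
  refine congr_arg₂ _ (congr_arg _ (sum_congr rfl fun k _ => ?_)) (sum_congr rfl fun k _ => ?_) <;>
    split_ifs with hk
  · rfl
  · obtain ⟨j, hjk, hmj⟩ := exists_pred_eq_of_not_dominant_add hm hk
    exact (Acoef_eq_zero_of_pred_eq hjk hmj).symm
  · rfl
  · rcases exists_succ_eq_or_last_of_not_dominant_sub hm hk with ⟨j, hkj, hmj⟩ | ⟨hlast, hm0⟩
    · exact (Bcoef_eq_zero_of_eq_succ hkj hmj).symm
    · exact (Bcoef_eq_zero_of_last hlast hm0).symm

end BoundaryTerms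

lemma univ_erase_eq_singleton_of_ne {j k : Fin 2} (hjk : j ≠ k) : univ.erase k = {j} := by
  revert hjk; fin_cases j <;> fin_cases k <;> decide

lemma genusP_div_dimN_e6 : genusP 2 8 6 1 / (2 * dimN 2 8 6 1) = 3 / 16 := by
  norm_num [genusP, dimN]

lemma rho_e6_zero : rho 2 8 6 1 0 = 11 / 2 := by norm_num [rho]

lemma rho_e6_one : rho 2 8 6 1 1 = 5 / 2 := by norm_num [rho]

noncomputable def acoefE6 (X Y : ℝ) : ℝ :=
  3 / 16 * ((2 * X + 5) ^ 2 / (2 * X * (2 * X + 1))) * ((X - Y + 3) * (X + Y + 3) / ((X - Y) * (X + Y)))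

noncomputable def bcoefE6 (X Y : ℝ) : ℝ :=
  3 / 16 * ((2 * X - 5) ^ 2 / (2 * X * (2 * X - 1))) * ((X + Y - 3) * (X - Y - 3) / ((X + Y) * (X - Y)))

lemma Acoef_e6 (m : Fin 2 → ℤ) {j k : Fin 2} (hjk : j ≠ k) :
    Acoef 2 8 6 1 m k = acoefE6 (m k + rho 2 8 6 1 k) (m j + rho 2 8 6 1 j) := by
  rw [Acoef, univ_erase_eq_singleton_of_ne hjk, prod_singleton, genusP_div_dimN_e6, acoefE6]
  ring

lemma Bcoef_e6 (m : Fin 2 → ℤ) {j k : Fin 2} (hjk : j ≠ k) :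
    Bcoef 2 8 6 1 m k = bcoefE6 (m k + rho 2 8 6 1 k) (m j + rho 2 8 6 1 j) := by
  rw [Bcoef, univ_erase_eq_singleton_of_ne hjk, prod_singleton, genusP_div_dimN_e6, bcoefE6]
  ring

lemma one_sub_acoefE6_sub_bcoefE6 {X Y : ℝ} (hY : 1 / 2 < Y) (hXY : Y < X) :
    1 - (acoefE6 X Y + acoefE6 Y X) - (bcoefE6 X Y + bcoefE6 Y X)
      = (X ^ 2 - 25 / 4) * (Y ^ 2 - 25 / 4) / (4 * (X ^ 2 - 1 / 4) * (Y ^ 2 - 1 / 4)) := by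
  have hden : 4 * (X ^ 2 - 1 / 4) * (Y ^ 2 - 1 / 4) ≠ 0 := by
    have : 1 / 4 < Y ^ 2 := by nlinarith
    have : 1 / 4 < X ^ 2 := by nlinarith
    positivity
  have : X - Y ≠ 0 := by linarith
  have : Y - X ≠ 0 := by linarith
  have : X + Y ≠ 0 := by linarith
  have : Y + X ≠ 0 := by linarith
  have : X ≠ 0 := by linarith
  have : Y ≠ 0 := by linarith
  have : 2 * X + 1 ≠ 0 := by linarith
  have : 2 * X - 1 ≠ 0 := by linarith
  have : 2 * Y + 1 ≠ 0 := by linarith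
  have : 2 * Y - 1 ≠ 0 := by linarith
  rw [eq_div_iff hden, acoefE6, acoefE6, bcoefE6, bcoefE6]
  field_simp
  ring

theorem Cm_e6_complex (m : Fin 2 → ℤ) (hm : Dominant m) :
    Ccoef 2 8 6 1 m
        = (m 1 : ℝ) * ((m 0 : ℝ) + 3) * ((m 0 : ℝ) + 8) * ((m 1 : ℝ) + 5) /
          (4 * ((m 0 : ℝ) + 5) * ((m 0 : ℝ) + 6) * ((m 1 : ℝ) + 2) * ((m 1 : ℝ) + 3)) ∧
      (Ccoef 2 8 6 1 m = 0 ↔ m 1 = 0) := by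
  obtain ⟨x, hx⟩ := Int.eq_ofNat_of_zero_le (hm.2 0)
  obtain ⟨y, hy⟩ := Int.eq_ofNat_of_zero_le (hm.2 1)
  have hyx : (y : ℝ) ≤ x := by exact_mod_cast hx ▸ hy ▸ hm.1 0 1 (by decide)
  have hC : Ccoef 2 8 6 1 m = (y : ℝ) * ((x : ℝ) + 3) * ((x : ℝ) + 8) * ((y : ℝ) + 5) /
      (4 * ((x : ℝ) + 5) * ((x : ℝ) + 6) * ((y : ℝ) + 2) * ((y : ℝ) + 3)) := by
    rw [Ccoef_eq_of_dominant hm, Fin.sum_univ_two, Fin.sum_univ_two,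
      Acoef_e6 m (j := 1) (k := 0) (by decide), Acoef_e6 m (j := 0) (k := 1) (by decide),
      Bcoef_e6 m (j := 1) (k := 0) (by decide), Bcoef_e6 m (j := 0) (k := 1) (by decide),
      rho_e6_zero, rho_e6_one, hx, hy]
    push_cast
    rw [one_sub_acoefE6_sub_bcoefE6 (by linarith) (by linarith)]
    ring
  rw [hx, hy]
  push_cast
  refine ⟨hC, ?_⟩
  rw [hC, div_eq_zero_iff, or_iff_left (by positivity)]
  norm_cast
  simp
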